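/- Let $x_0 \in \mathbb{R}^n$ and define two state sequences: the consolidated prediction $\bar x_{t+1} = A\bar x_t + B u_t$ with $\bar x_0 = x_0$, and local states $x^{(t)}_t$ satisfying $x^{(0)}_0 = x_0$ and $|A x^{(t)}_t + B u_t - x^{(t+1)}_{t+1}| \le 2\epsilon_{z_{t+1}}\mathbf{1}_n$ componentwise for all $t$. Then for every $t \ge 1$, $\|\bar x_t - x^{(t)}_t\|_\infty \le 2\sum_{j=0}^{t-1}\|A^j\|\,\epsilon_{z_{t-j}}$, where $\|A^j\|$ is the operator norm induced by the infinity norm. -/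

import Mathlib

/-!
The error `e t = x̄ t - x⁽ᵗ⁾ t` starts at `0` and obeys the perturbed linear recurrence
`e (t + 1) = A e t + d (t + 1)`, where the defect `d (t + 1) = A x⁽ᵗ⁾ t + B u t - x⁽ᵗ⁺¹⁾ (t + 1)`
has sup norm at most `2 ε (t + 1)`. Variation of constants gives `e t = ∑_{j < t} A ^ j d (t - j)`,
and the bound follows from the triangle inequality and submultiplicativity of the induced norm.
-/

attribute [local instance] Matrix.linftyOpNormedAddCommGroup

open Finset Matrix

namespace Matrix

variable {ι R : Type*} [Fintype ι] [DecidableEq ι]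

theorem eq_pow_mulVec_add_sum_of_succ_eq [CommSemiring R] (A : Matrix ι ι R) (e d : ℕ → ι → R)
    (h : ∀ s, e (s + 1) = A *ᵥ e s + d (s + 1)) (t : ℕ) :
    e t = (A ^ t) *ᵥ e 0 + ∑ j ∈ range t, (A ^ j) *ᵥ d (t - j) := by
  induction t with
  | zero => simp
  | succ t ih =>
    have shift : ∀ j ∈ range t, A *ᵥ (A ^ j) *ᵥ d (t - j) = (A ^ (j + 1)) *ᵥ d (t + 1 - (j + 1)) :=
      fun j _ => by rw [mulVec_mulVec, pow_succ', Nat.add_sub_add_right]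
    rw [h, ih, mulVec_add, mulVec_mulVec, ← pow_succ', mulVec_sum, sum_congr rfl shift,
      sum_range_succ' _ t, add_assoc]
    simp

theorem norm_le_sum_of_norm_sub_mulVec_le [NormedCommRing R] (A : Matrix ι ι R) (e : ℕ → ι → R)
    (δ : ℕ → ℝ) (he0 : e 0 = 0) (hδ : ∀ s, ‖e (s + 1) - A *ᵥ e s‖ ≤ δ (s + 1)) (t : ℕ) :
    ‖e t‖ ≤ ∑ j ∈ range t, ‖A ^ j‖ * δ (t - j) := by
  set d : ℕ → ι → R := fun s => e s - A *ᵥ e (s - 1)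
  have hd : ∀ s, d (s + 1) = e (s + 1) - A *ᵥ e s := fun s => by simp [d]
  have hrec : ∀ s, e (s + 1) = A *ᵥ e s + d (s + 1) := fun s => by
    rw [hd, add_sub_cancel]
  rw [eq_pow_mulVec_add_sum_of_succ_eq A e d hrec t, he0, mulVec_zero, zero_add]
  refine (norm_sum_le _ _).trans (sum_le_sum fun j hj => ?_)
  obtain ⟨s, hs⟩ : ∃ s, t - j = s + 1 := ⟨t - j - 1, by grind⟩
  calc ‖(A ^ j) *ᵥ d (t - j)‖ ≤ ‖A ^ j‖ * ‖d (t - j)‖ := linfty_opNorm_mulVec _ _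
    _ ≤ ‖A ^ j‖ * δ (t - j) := by
      rw [hs, hd]
      exact mul_le_mul_of_nonneg_left (hδ s) (norm_nonneg _)

end Matrix

theorem stmt1 (n m : ℕ) (A : Matrix (Fin n) (Fin n) ℝ) (B : Matrix (Fin n) (Fin m) ℝ)
    (u : ℕ → Fin m → ℝ) (εz : ℕ → ℝ) (hεz : ∀ t, 0 ≤ εz t)
    (x0 : Fin n → ℝ) (xbar xloc : ℕ → Fin n → ℝ)
    (hbar0 : xbar 0 = x0)
    (hbar : ∀ t, xbar (t + 1) = A.mulVec (xbar t) + B.mulVec (u t))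
    (hloc0 : xloc 0 = x0)
    (hloc : ∀ t i, |(A.mulVec (xloc t) + B.mulVec (u t)) i - xloc (t + 1) i| ≤ 2 * εz (t + 1)) :
    ∀ t : ℕ, 1 ≤ t →
      ‖xbar t - xloc t‖ ≤ 2 * ∑ j ∈ Finset.range t, ‖A ^ j‖ * εz (t - j) := by
  intro t _
  have defect : ∀ s, (xbar (s + 1) - xloc (s + 1)) - A *ᵥ (xbar s - xloc s)
      = A *ᵥ xloc s + B *ᵥ u s - xloc (s + 1) := fun s => by
    rw [hbar, mulVec_sub]
    abel
  have defect_le : ∀ s, ‖(xbar (s + 1) - xloc (s + 1)) - A *ᵥ (xbar s - xloc s)‖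
      ≤ 2 * εz (s + 1) := fun s => by
    rw [defect, pi_norm_le_iff_of_nonneg (by linarith [hεz (s + 1)])]
    exact fun i => (Real.norm_eq_abs _).trans_le (hloc s i)
  calc ‖xbar t - xloc t‖ ≤ ∑ j ∈ range t, ‖A ^ j‖ * (2 * εz (t - j)) :=
        norm_le_sum_of_norm_sub_mulVec_le A (xbar - xloc) (fun s => 2 * εz s)
          (by simp [hbar0, hloc0]) defect_le t
    _ = 2 * ∑ j ∈ range t, ‖A ^ j‖ * εz (t - j) := by
        rw [mul_sum]
        exact sum_congr rfl fun j _ => mul_left_comm _ _ _
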